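/- For θ, θ' > 0 and x ∈ ℝ, one has lim_{H→1/4} [δ⁴_θδ⁴_{θ'}(|·|^{4H+5})(x)] / (H − 1/4) = 4 · δ⁴_θδ⁴_{θ'}(y ↦ |y|⁶ log|y|)(x), where |y|⁶ log|y| is interpreted as 0 at y = 0; in particular δ⁴_θδ⁴_{θ'}(|·|⁶)(x) = 0. -/

import Mathlib

open Real Filter Topology

/-- Fourth-order central difference with step `θ`. -/
noncomputable def cdiff4 (θ : ℝ) (F : ℝ → ℝ) (x : ℝ) : ℝ :=
  F (x + 2*θ) - 4 * F (x + θ) + 6 * F x - 4 * F (x - θ) + F (x - 2*θ)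

private lemma key (c : ℝ) :
    HasDerivAt (fun H : ℝ => |c| ^ (4*H + 5)) (4 * (|c| ^ (6:ℕ) * Real.log |c|)) (1/4) := by
  rcases eq_or_ne c 0 with rfl | hc
  · simp only [abs_zero, Real.log_zero, mul_zero, zero_pow, ne_eq, OfNat.ofNat_ne_zero,
      not_false_eq_true, zero_mul]
    have : (fun H : ℝ => (0:ℝ) ^ (4*H + 5)) =ᶠ[𝓝 (1/4 : ℝ)] fun _ => (0:ℝ) := by
      have : ∀ᶠ H : ℝ in 𝓝 (1/4 : ℝ), 4*H + 5 ≠ 0 := by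
        have : ContinuousAt (fun H : ℝ => 4*H + 5) (1/4) := by fun_prop
        have := this.eventually_ne (by norm_num : 4*(1/4:ℝ) + 5 ≠ 0)
        exact this
      filter_upwards [this] with H hH
      exact Real.zero_rpow hH
    exact (hasDerivAt_const _ 0).congr_of_eventuallyEq this
  · have habs : (0:ℝ) < |c| := abs_pos.mpr hc
    have h1 : HasDerivAt (fun H : ℝ => 4*H + 5) 4 (1/4) := by
      simpa using ((hasDerivAt_id (1/4:ℝ)).const_mul 4).add_const 5
    have h2 := (Real.hasStrictDerivAt_const_rpow habs (4*(1/4) + 5)).hasDerivAt.comp (1/4) h1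
    have : 4 * (|c| ^ (6:ℕ) * Real.log |c|) = |c| ^ (4*(1/4:ℝ) + 5) * Real.log |c| * 4 := by
      rw [show (4*(1/4:ℝ) + 5) = ((6:ℕ):ℝ) by norm_num, Real.rpow_natCast]
      ring
    rw [this]
    exact h2

private lemma inner_deriv (θ' z : ℝ) :
    HasDerivAt (fun H : ℝ => cdiff4 θ' (fun y => |y| ^ (4*H + 5)) z)
      (4 * cdiff4 θ' (fun y => |y| ^ (6:ℕ) * Real.log |y|) z) (1/4) := by
  simp only [cdiff4]
  have h := ((((key (z + 2*θ')).sub ((key (z + θ')).const_mul 4)).add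
      ((key z).const_mul 6)).sub ((key (z - θ')).const_mul 4)).add (key (z - 2*θ'))
  exact h.congr_deriv (by ring)

private lemma outer_deriv (θ θ' x : ℝ) :
    HasDerivAt (fun H : ℝ => cdiff4 θ (cdiff4 θ' (fun y => |y| ^ (4*H + 5))) x)
      (4 * cdiff4 θ (cdiff4 θ' (fun y => |y| ^ (6:ℕ) * Real.log |y|)) x) (1/4) := by
  simp only [cdiff4]
  have h := ((((inner_deriv θ' (x + 2*θ)).sub ((inner_deriv θ' (x + θ)).const_mul 4)).add
      ((inner_deriv θ' x).const_mul 6)).sub ((inner_deriv θ' (x - θ)).const_mul 4)).add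
      (inner_deriv θ' (x - 2*θ))
  simp only [cdiff4] at h
  exact h.congr_deriv (by ring)

private lemma zero_at (θ θ' x : ℝ) :
    cdiff4 θ (cdiff4 θ' (fun y => |y| ^ (6:ℕ))) x = 0 := by
  simp only [cdiff4, Even.pow_abs (⟨3, by norm_num⟩ : Even 6)]
  ring

/-- Note: `Real.log 0 = 0` in Mathlib, so `|y|⁶ log|y|` below is `0` at `y = 0`,
as required. -/
theorem statement12 (θ θ' : ℝ) (hθ : 0 < θ) (hθ' : 0 < θ') (x : ℝ) :
    Tendsto
      (fun H : ℝ => cdiff4 θ (cdiff4 θ' (fun y => |y| ^ (4*H + 5))) x / (H - 1/4))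
      (𝓝[≠] (1/4 : ℝ))
      (𝓝 (4 * cdiff4 θ (cdiff4 θ' (fun y => |y| ^ (6:ℕ) * Real.log |y|)) x)) ∧
    cdiff4 θ (cdiff4 θ' (fun y => |y| ^ (6:ℕ))) x = 0 := by
  have hzero : cdiff4 θ (cdiff4 θ' (fun y => |y| ^ (4*(1/4:ℝ) + 5))) x = 0 := by
    have : (fun y : ℝ => |y| ^ (4*(1/4:ℝ) + 5)) = fun y : ℝ => |y| ^ (6:ℕ) := by
      funext y
      rw [show (4*(1/4:ℝ) + 5) = ((6:ℕ):ℝ) by norm_num, Real.rpow_natCast]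
    rw [this]
    exact zero_at θ θ' x
  refine ⟨?_, zero_at θ θ' x⟩
  have h := (outer_deriv θ θ' x)
  rw [hasDerivAt_iff_tendsto_slope] at h
  refine h.congr' ?_
  filter_upwards [self_mem_nhdsWithin] with H hH
  simp only [slope_def_field, hzero, sub_zero]
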